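/- arXiv:1008.3690 — 6 statements merged into one kernel-verified Lean document; each statement's English description precedes it below -/
import Mathlib

section
/- Let d ≥ 2 and let F(x,y) be a polynomial of degree at most d that belongs to the ideal of ℂ[x,y] generated by x^{d-1} - 1 and y^{d-1} - 1. Then there exist polynomials α(x,y) and β(x,y) of degree at most 1 (affine polynomials) such that F(x,y) = α(x,y)(x^{d-1} - 1) + β(x,y)(y^{d-1} - 1). -/
/-!
Put `n = d - 1`. Dividing `F` by `x ^ n - 1` and `y ^ n - 1` with respect to the
degree-lexicographic order produces cofactors whose product with a divisor has degree at most
`deg F ≤ n + 1`, so the cofactors are affine, and a remainder of degree `< n` in each variable.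
The remainder lies in the ideal, hence vanishes on the `n²` points of `μₙ × μₙ`, hence is zero.
-/

open MvPolynomial

namespace MonomialOrder

variable {σ R : Type*} [CommRing R] [Nontrivial R] (m : MonomialOrder σ)

theorem degree_X_pow_sub_one (s : σ) {n : ℕ} (hn : n ≠ 0) :
    m.degree (X s ^ n - 1 : MvPolynomial σ R) = Finsupp.single s n := by
  classical
  rw [X_pow_eq_monomial, m.degree_sub_of_lt] <;> rw [m.degree_monomial, if_neg one_ne_zero]
  simpa [m.toSyn_lt_iff_ne_zero] using hn

theorem monic_X_pow_sub_one (s : σ) {n : ℕ} (hn : n ≠ 0) :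
    m.Monic (X s ^ n - 1 : MvPolynomial σ R) := by
  classical
  rw [Monic, leadingCoeff, m.degree_X_pow_sub_one s hn]
  simp [coeff_X_pow, coeff_one, (Finsupp.single_ne_zero.2 hn).symm]

end MonomialOrder

namespace MvPolynomial

variable {σ R : Type*} [CommRing R]

theorem totalDegree_X_pow_sub_one [Nontrivial R] [LinearOrder σ] [WellFoundedGT σ] (s : σ)
    {n : ℕ} (hn : n ≠ 0) : (X s ^ n - 1 : MvPolynomial σ R).totalDegree = n := by
  rw [← degree_degLexDegree, MonomialOrder.degree_X_pow_sub_one _ s hn, Finsupp.degree_single]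

theorem exists_eq_sum_mul_X_pow_sub_one_add [IsDomain R] [Fintype σ] [LinearOrder σ] {n : ℕ}
    (hn : n ≠ 0) (f : MvPolynomial σ R) :
    ∃ (g : σ → MvPolynomial σ R) (r : MvPolynomial σ R), f = ∑ i, g i * (X i ^ n - 1) + r ∧
      (∀ i, (g i).totalDegree ≤ f.totalDegree - n) ∧ ∀ i, r.degreeOf i < n := by
  have hmonic (i : σ) := MonomialOrder.degLex.monic_X_pow_sub_one (R := R) i hn
  obtain ⟨g, r, hf, hg, hr⟩ := MonomialOrder.degLex.div (b := fun i => X i ^ n - 1)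
    (fun i => (hmonic i).leadingCoeff_eq_one ▸ isUnit_one) f
  refine ⟨g, r, ?_, fun i => ?_, fun i => ?_⟩
  · rw [hf, Finsupp.linearCombination_apply, Finsupp.sum_fintype _ _ (by simp)]
    simp only [smul_eq_mul]
  · by_cases hgi : g i = 0
    · simp [hgi]
    have hdeg := degLex_totalDegree_monotone (hg i)
    rw [totalDegree_mul_of_isDomain (hmonic i).ne_zero hgi, totalDegree_X_pow_sub_one i hn]
      at hdeg
    omega
  · rw [degreeOf_lt_iff (Nat.pos_of_ne_zero hn)]
    intro c hc
    have hndvd := hr c hc i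
    rw [MonomialOrder.degree_X_pow_sub_one _ i hn, Finsupp.single_le_iff] at hndvd
    omega

theorem eq_zero_of_degreeOf_lt_of_forall_pow_eq_one [IsDomain R] [Finite σ] {n : ℕ} {ζ : R}
    (hζ : IsPrimitiveRoot ζ n) (p : MvPolynomial σ R) (hdeg : ∀ i, p.degreeOf i < n)
    (heval : ∀ x : σ → R, (∀ i, x i ^ n = 1) → eval x p = 0) : p = 0 := by
  refine eq_zero_of_eval_zero_at_prod_finset p (fun _ => Polynomial.nthRootsFinset n (1 : R))
    (by simpa [hζ.card_nthRootsFinset] using hdeg) fun x hx => heval x fun i => ?_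
  rcases n.eq_zero_or_pos with rfl | hn
  · exact pow_zero _
  · exact (Polynomial.mem_nthRootsFinset hn 1).1 (hx i)

end MvPolynomial

/-- Lemma `ab`: a polynomial of degree ≤ d in the ideal generated by
`x^(d-1) - 1` and `y^(d-1) - 1` can be written with affine cofactors. -/
theorem stmt_0 (d : ℕ) (hd : 2 ≤ d) (F : MvPolynomial (Fin 2) ℂ)
    (hdeg : F.totalDegree ≤ d)
    (hF : F ∈ Ideal.span ({(X 0) ^ (d - 1) - 1, (X 1) ^ (d - 1) - 1} :
      Set (MvPolynomial (Fin 2) ℂ))) :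
    ∃ α β : MvPolynomial (Fin 2) ℂ, α.totalDegree ≤ 1 ∧ β.totalDegree ≤ 1 ∧
      F = α * ((X 0) ^ (d - 1) - 1) + β * ((X 1) ^ (d - 1) - 1) := by
  obtain ⟨g, r, hFgr, hg, hr⟩ := exists_eq_sum_mul_X_pow_sub_one_add (by omega : d - 1 ≠ 0) F
  rw [Fin.sum_univ_two] at hFgr
  have hr0 : r = 0 := by
    refine eq_zero_of_degreeOf_lt_of_forall_pow_eq_one
      (Complex.isPrimitiveRoot_exp (d - 1) (by omega)) r hr fun x hx => ?_
    obtain ⟨p, q, hpq⟩ := Ideal.mem_span_pair.mp hF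
    simpa [hx] using (congrArg (eval x) (hpq.trans hFgr)).symm
  refine ⟨g 0, g 1, (hg 0).trans (by omega), (hg 1).trans (by omega), ?_⟩
  rw [hFgr, hr0, add_zero]
end

section
/- For a foliation F of degree d on the complex projective plane, the sum over i of i times the number of radial singularities of F of order i is at most (d+2)(d-1). -/
/-!
Linear forms are irreducible, and pairwise non-proportional ones are pairwise relatively prime,
so the powers `ℓ s ^ ord s` dividing `Δ` divide it jointly. Their product is homogeneous of
degree `∑ s, ord s`, which is therefore at most `deg Δ = (d + 2) * (d - 1)`.
-/

open MvPolynomial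

namespace MvPolynomial

variable {σ K : Type*} [Field K]

theorem exists_eq_C_mul_of_dvd_of_totalDegree_le {R : Type*} [CommRing R] [IsDomain R]
    {p q : MvPolynomial σ R} (hpq : p ∣ q) (hq : q ≠ 0) (hdeg : q.totalDegree ≤ p.totalDegree) :
    ∃ c, q = C c * p := by
  obtain ⟨r, rfl⟩ := hpq
  have hr : r ≠ 0 := right_ne_zero_of_mul hq
  rw [totalDegree_mul_of_isDomain (left_ne_zero_of_mul hq) hr] at hdeg
  refine ⟨coeff 0 r, ?_⟩
  rw [← totalDegree_eq_zero_iff_eq_C.mp (by omega), mul_comm]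

theorem irreducible_of_totalDegree_eq_one_of_field {p : MvPolynomial σ K}
    (hp : p.totalDegree = 1) : Irreducible p := by
  refine irreducible_of_totalDegree_eq_one hp fun x hx => isUnit_iff_ne_zero.mpr ?_
  rintro rfl
  have : p = 0 := by ext i; simpa using hx i
  simp [this] at hp

theorem isRelPrime_of_totalDegree_eq_one {p q : MvPolynomial σ K} (hp : p.totalDegree = 1)
    (hq : q.totalDegree = 1) (hpq : ¬∃ c, q = C c * p) : IsRelPrime p q := by
  refine (irreducible_of_totalDegree_eq_one_of_field hp).isRelPrime_iff_not_dvd.mpr fun h => ?_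
  have hq0 : q ≠ 0 := by rintro rfl; simp at hq
  exact hpq (exists_eq_C_mul_of_dvd_of_totalDegree_le h hq0 (by omega))

theorem sum_le_totalDegree_of_pow_dvd {ι : Type*} [Fintype ι] {f : MvPolynomial σ K}
    (hf : f ≠ 0) (ℓ : ι → MvPolynomial σ K) (n : ι → ℕ) (hℓ : ∀ i, (ℓ i).IsHomogeneous 1)
    (hℓne : ∀ i, ℓ i ≠ 0) (hdistinct : Pairwise fun i j => ¬∃ c, ℓ i = C c * ℓ j)
    (hdvd : ∀ i, ℓ i ^ n i ∣ f) : ∑ i, n i ≤ f.totalDegree := by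
  have hdeg : ∀ i, (ℓ i).totalDegree = 1 := fun i => (hℓ i).totalDegree (hℓne i)
  have hcoprime : Pairwise fun i j => IsRelPrime (ℓ i ^ n i) (ℓ j ^ n j) := fun i j hij =>
    (isRelPrime_of_totalDegree_eq_one (hdeg i) (hdeg j) (hdistinct hij.symm)).pow
  have hprod_dvd : ∏ i, ℓ i ^ n i ∣ f := Fintype.prod_dvd_of_isRelPrime hcoprime hdvd
  have hprod_hom : (∏ i, ℓ i ^ n i).IsHomogeneous (∑ i, n i) := by
    simpa using IsHomogeneous.prod Finset.univ _ (fun i => 1 * n i) fun i _ => (hℓ i).pow (n i)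
  have hprod_ne : ∏ i, ℓ i ^ n i ≠ 0 :=
    Finset.prod_ne_zero_iff.mpr fun i _ => pow_ne_zero _ (hℓne i)
  calc ∑ i, n i = (∏ i, ℓ i ^ n i).totalDegree := (hprod_hom.totalDegree hprod_ne).symm
    _ ≤ f.totalDegree := totalDegree_le_of_dvd_of_isDomain hprod_dvd hf

end MvPolynomial

theorem stmt_3_general {d : ℕ} {ι : Type} [Fintype ι]
    (ord : ι → ℕ)
    (Δ : MvPolynomial (Fin 3) ℂ) (hΔne : Δ ≠ 0)
    (hΔdeg : Δ.totalDegree = (d + 2) * (d - 1))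
    (ℓ : ι → MvPolynomial (Fin 3) ℂ)
    (hℓ : ∀ s, (ℓ s).IsHomogeneous 1) (hℓne : ∀ s, ℓ s ≠ 0)
    (hdvd : ∀ s, (ℓ s) ^ (ord s) ∣ Δ)
    (hdistinct : ∀ s t, s ≠ t → ¬ ∃ c : ℂ, ℓ s = C c * ℓ t) :
    ∑ s, ord s ≤ (d + 2) * (d - 1) :=
  hΔdeg ▸ sum_le_totalDegree_of_pow_dvd hΔne ℓ ord hℓ hℓne (fun s t => hdistinct s t) hdvd

/-- For a foliation of degree `d` on `ℙ²`, the weighted number of radial singularities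
`∑ᵢ i · rᵢ(F) = ∑_{s radial} ord(s)` is at most `(d+2)(d-1)`.  Following the given
context, we assume that the discriminant `Δ` of the dual `d`-web of degree one is a
(nonzero, homogeneous) curve of degree `(d+2)(d-1)` and that the dual line `ℓ s` of a
radial singularity `s` of order `ord s` divides `Δ` with multiplicity `ord s`; distinct
singularities give non-proportional dual lines. -/
theorem stmt_3 {d : ℕ} (hd : 1 ≤ d) {ι : Type} [Fintype ι]
    (ord : ι → ℕ)
    (Δ : MvPolynomial (Fin 3) ℂ) (hΔne : Δ ≠ 0)
    (hΔdeg : Δ.totalDegree = (d + 2) * (d - 1))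
    (hΔhom : Δ.IsHomogeneous ((d + 2) * (d - 1)))
    (ℓ : ι → MvPolynomial (Fin 3) ℂ)
    (hℓ : ∀ s, (ℓ s).IsHomogeneous 1) (hℓne : ∀ s, ℓ s ≠ 0)
    (hdvd : ∀ s, (ℓ s) ^ (ord s) ∣ Δ)
    (hdistinct : ∀ s t, s ≠ t → ¬ ∃ c : ℂ, ℓ s = C c * ℓ t) :
    ∑ s, ord s ≤ (d + 2) * (d - 1) :=
  stmt_3_general ord Δ hΔne hΔdeg ℓ hℓ hℓne hdvd hdistinct
end

section
/- Let W be a germ of smooth 4-web on (ℂ²,0) decomposed as four pairwise transverse foliations F_1,…,F_4 defined by 1-forms ω_1,…,ω_4 with ω_1 + ω_2 + ω_3 = 0 and ω_4 = λω_1 + μω_2 for constants λ, μ ∈ ℂ (i.e. the j-invariant of W is constant). Then there exists a unique holomorphic 1-form η with dω_i = η ∧ ω_i for all i = 1,…,4, and consequently the curvature of W equals 4 times the curvature of any of its 3-subwebs. -/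
/-- Germs of holomorphic functions at `0 ∈ ℂ²` are modelled by formal power series
in two variables (variable `0` is `x`, variable `1` is `y`). -/
noncomputable def pd9 (i : Fin 2) (f : MvPowerSeries (Fin 2) ℂ) :
    MvPowerSeries (Fin 2) ℂ :=
  fun m => ((m i : ℕ) + 1 : ℂ) * MvPowerSeries.coeff (R := ℂ) (m + Finsupp.single i 1) f

/-- A 1-form `P dx + Q dy` is the pair `(P, Q)`; its exterior differential is the
coefficient of `d(P dx + Q dy) = (∂ₓQ - ∂yP) dx ∧ dy`. -/
noncomputable def dP9 (ω : MvPowerSeries (Fin 2) ℂ × MvPowerSeries (Fin 2) ℂ) :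
    MvPowerSeries (Fin 2) ℂ :=
  pd9 0 ω.2 - pd9 1 ω.1

/-- Wedge product coefficient: `(A dx + B dy) ∧ (P dx + Q dy) = (AQ - BP) dx ∧ dy`. -/
noncomputable def wP9 (η ω : MvPowerSeries (Fin 2) ℂ × MvPowerSeries (Fin 2) ℂ) :
    MvPowerSeries (Fin 2) ℂ :=
  η.1 * ω.2 - η.2 * ω.1

/-!
Since `ω₀ ∧ ω₁` is a unit, Cramer's rule produces a 1-form `η` with `dωᵢ = η ∧ ωᵢ` for `i = 0, 1`,
and any two such forms agree. The forms `ω₂ = -ω₀ - ω₁` and `ω₃ = λω₀ + μω₁` are combinations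
with constant coefficients, so their structure equations follow from those of `ω₀, ω₁` by
linearity of `d` and of `η ∧ ·`. Every 3-subweb contains a transverse pair, hence its connection
form is `η` too, and each of the four 3-subweb curvatures is `dη`.
-/

open MvPowerSeries

local notation "𝒪" => MvPowerSeries (Fin 2) ℂ

lemma coeff_pd9 (i : Fin 2) (f : 𝒪) (m : Fin 2 →₀ ℕ) :
    coeff m (pd9 i f) = ((m i : ℕ) + 1 : ℂ) * coeff (m + Finsupp.single i 1) f :=
  rfl

lemma pd9_add (i : Fin 2) (f g : 𝒪) : pd9 i (f + g) = pd9 i f + pd9 i g := by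
  ext m
  simp only [coeff_pd9, map_add, mul_add]

lemma pd9_C_mul (i : Fin 2) (c : ℂ) (f : 𝒪) : pd9 i (C c * f) = C c * pd9 i f := by
  ext m
  simp only [coeff_pd9, coeff_C_mul]
  ring

lemma dP9_C_mul_add_C_mul (c d : ℂ) (ω ω' : 𝒪 × 𝒪) :
    dP9 (C c * ω.1 + C d * ω'.1, C c * ω.2 + C d * ω'.2) = C c * dP9 ω + C d * dP9 ω' := by
  simp only [dP9, pd9_add, pd9_C_mul]
  ring

lemma dP9_eq_wP9_C_mul_add_C_mul {η ω ω' : 𝒪 × 𝒪} (c d : ℂ)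
    (h : dP9 ω = wP9 η ω) (h' : dP9 ω' = wP9 η ω') :
    dP9 (C c * ω.1 + C d * ω'.1, C c * ω.2 + C d * ω'.2) =
      wP9 η (C c * ω.1 + C d * ω'.1, C c * ω.2 + C d * ω'.2) := by
  rw [dP9_C_mul_add_C_mul, h, h']
  simp only [wP9]
  ring

lemma eq_of_wP9_eq_of_wP9_ne_zero {p q a b : 𝒪 × 𝒪} (hpq : wP9 p q ≠ 0)
    (hp : wP9 a p = wP9 b p) (hq : wP9 a q = wP9 b q) : a = b := by
  simp only [wP9] at hp hq hpq
  have h1 : (a.1 - b.1) * (p.1 * q.2 - p.2 * q.1) = 0 := by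
    linear_combination p.1 * hq - q.1 * hp
  have h2 : (a.2 - b.2) * (p.1 * q.2 - p.2 * q.1) = 0 := by
    linear_combination p.2 * hq - q.2 * hp
  exact Prod.ext (sub_eq_zero.mp ((mul_eq_zero.mp h1).resolve_right hpq))
    (sub_eq_zero.mp ((mul_eq_zero.mp h2).resolve_right hpq))

/-- Cramer's rule, with the invertible determinant `p ∧ q`. -/
lemma exists_wP9_eq_of_constantCoeff_ne_zero {p q : 𝒪 × 𝒪}
    (hpq : constantCoeff (wP9 p q) ≠ 0) (a b : 𝒪) :
    ∃ η : 𝒪 × 𝒪, wP9 η p = a ∧ wP9 η q = b := by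
  have hinv : wP9 p q * (wP9 p q)⁻¹ = 1 := MvPowerSeries.mul_inv_cancel _ hpq
  refine ⟨((b * p.1 - a * q.1) * (wP9 p q)⁻¹, (b * p.2 - a * q.2) * (wP9 p q)⁻¹), ?_, ?_⟩
  all_goals simp only [wP9] at hinv ⊢
  · linear_combination a * hinv
  · linear_combination b * hinv

lemma eq_of_dP9_eq_wP9_of_one_lt_card {ι : Type*} {ω : ι → 𝒪 × 𝒪} {S : Finset ι}
    (htrans : ∀ i ∈ S, ∀ j ∈ S, i ≠ j → wP9 (ω i) (ω j) ≠ 0) (hS : 1 < S.card) {η η' : 𝒪 × 𝒪}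
    (hη : ∀ i ∈ S, dP9 (ω i) = wP9 η (ω i)) (hη' : ∀ i ∈ S, dP9 (ω i) = wP9 η' (ω i)) :
    η = η' := by
  obtain ⟨i, hi, j, hj, hij⟩ := Finset.one_lt_card.mp hS
  exact eq_of_wP9_eq_of_wP9_ne_zero (htrans i hi j hj hij)
    ((hη i hi).symm.trans (hη' i hi)) ((hη j hj).symm.trans (hη' j hj))

/-- A germ of smooth 4-web on `(ℂ²,0)` given by pairwise transverse foliations defined
by 1-forms `ω₀,…,ω₃` with `ω₀ + ω₁ + ω₂ = 0` and `ω₃ = λω₀ + μω₁` (constant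
`j`-invariant).  Then there is a unique holomorphic 1-form `η` with `dωᵢ = η ∧ ωᵢ` for
all `i`; any 1-form `η_T` solving these equations for a 3-element subset `T` (i.e. a
connection form of the corresponding 3-subweb) has `dη_T = dη`, so the curvature of
the 4-web — the sum of the curvatures of its four 3-subwebs — equals `4 dη`, four
times the curvature of any of its 3-subwebs. -/
theorem stmt_9 (ω : Fin 4 → MvPowerSeries (Fin 2) ℂ × MvPowerSeries (Fin 2) ℂ)
    (lam mu : ℂ)
    (htrans : ∀ i j, i ≠ j →
      MvPowerSeries.constantCoeff (σ := Fin 2) (R := ℂ) (wP9 (ω i) (ω j)) ≠ 0)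
    (hsum1 : (ω 0).1 + (ω 1).1 + (ω 2).1 = 0)
    (hsum2 : (ω 0).2 + (ω 1).2 + (ω 2).2 = 0)
    (h41 : (ω 3).1 = MvPowerSeries.C (σ := Fin 2) (R := ℂ) lam * (ω 0).1
      + MvPowerSeries.C (σ := Fin 2) (R := ℂ) mu * (ω 1).1)
    (h42 : (ω 3).2 = MvPowerSeries.C (σ := Fin 2) (R := ℂ) lam * (ω 0).2
      + MvPowerSeries.C (σ := Fin 2) (R := ℂ) mu * (ω 1).2) :
    ∃ η : MvPowerSeries (Fin 2) ℂ × MvPowerSeries (Fin 2) ℂ,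
      (∀ i, dP9 (ω i) = wP9 η (ω i)) ∧
      (∀ η', (∀ i, dP9 (ω i) = wP9 η' (ω i)) → η' = η) ∧
      (∀ T : Finset (Fin 4), T.card = 3 →
        ∀ ηT, (∀ i ∈ T, dP9 (ω i) = wP9 ηT (ω i)) → dP9 ηT = dP9 η) ∧
      (∀ κ : Finset (Fin 4) → MvPowerSeries (Fin 2) ℂ × MvPowerSeries (Fin 2) ℂ,
        (∀ T ∈ Finset.univ.filter (fun T : Finset (Fin 4) => T.card = 3),
          ∀ i ∈ T, dP9 (ω i) = wP9 (κ T) (ω i)) →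
        ∑ T ∈ Finset.univ.filter (fun T : Finset (Fin 4) => T.card = 3), dP9 (κ T)
          = 4 * dP9 η) := by
  have hne : ∀ i j, i ≠ j → wP9 (ω i) (ω j) ≠ 0 := fun i j hij h =>
    htrans i j hij (by rw [h, map_zero])
  obtain ⟨η, h0, h1⟩ := exists_wP9_eq_of_constantCoeff_ne_zero (htrans 0 1 (by decide))
    (dP9 (ω 0)) (dP9 (ω 1))
  have hω2 : ω 2 =
      (C (-1) * (ω 0).1 + C (-1) * (ω 1).1, C (-1) * (ω 0).2 + C (-1) * (ω 1).2) := by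
    simp only [map_neg, map_one]
    ext1
    · linear_combination hsum1
    · linear_combination hsum2
  have hη : ∀ i, dP9 (ω i) = wP9 η (ω i) := by
    intro i
    fin_cases i
    · exact h0.symm
    · exact h1.symm
    · exact hω2 ▸ dP9_eq_wP9_C_mul_add_C_mul _ _ h0.symm h1.symm
    · have hω3 : ω 3 = (C lam * (ω 0).1 + C mu * (ω 1).1, C lam * (ω 0).2 + C mu * (ω 1).2) :=
        Prod.ext h41 h42
      exact hω3 ▸ dP9_eq_wP9_C_mul_add_C_mul _ _ h0.symm h1.symm
  have hunique : ∀ S : Finset (Fin 4), 1 < S.card →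
      ∀ η', (∀ i ∈ S, dP9 (ω i) = wP9 η' (ω i)) → η' = η := fun S hS _ h' =>
    eq_of_dP9_eq_wP9_of_one_lt_card (fun i _ j _ => hne i j) hS h' fun i _ => hη i
  refine ⟨η, hη, fun η' h' => hunique Finset.univ (by decide) η' fun i _ => h' i,
    fun T hT ηT hηT => by rw [hunique T (by omega) ηT hηT], fun κ hκ => ?_⟩
  rw [Finset.sum_congr rfl fun T hT =>
      congrArg dP9 (hunique T (by rw [(Finset.mem_filter.mp hT).2]; norm_num) (κ T) (hκ T hT)),
    Finset.sum_const, show (Finset.univ.filter fun T : Finset (Fin 4) => T.card = 3).card = 4 by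
      decide, nsmul_eq_mul, Nat.cast_ofNat]
end

section
/- Let p, q be coprime integers with q > 0 and p ∉ {0, q}. Then the curve 𝔽_{p/q} defined by ∏_{n=1}^{q}∏_{m=1}^{q}(x^{p/q} + e^{2πim/q} y^{p/q} + e^{2πin/q} z^{p/q}) = 0, i.e. the polynomial obtained by expanding this product (which is a genuine polynomial in x, y, z), is irreducible. -/
/-!
Write `P = |p|` and `Q = q`. Substituting `x = s^Q, y = t^Q, z = u^Q` turns `F` into the
product, over pairs `(a, b)` of `Q`-th roots of unity, of the trinomials `s^P + a t^P + b u^P`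
(for `p = -P < 0`, of `(tu)^P + a (su)^P + b (st)^P`). Each of them is irreducible by
Eisenstein's criterion at a linear factor of `a t^P + b u^P`, and no two of them are associated,
so the product is squarefree. Rescaling the variables by `Q`-th roots of unity fixes every
polynomial in `s^Q, t^Q, u^Q` and, since `P` is prime to `Q`, moves any of the trinomials onto
any other up to a unit. Hence if `F = G H` with `G, H` non-units, an irreducible factor of
`G(s^Q, t^Q, u^Q)` can be moved onto one of `H(s^Q, t^Q, u^Q)`, which would then divide the
product twice.
-/

open Finset

theorem exists_pow_eq_of_pow_eq_one_of_coprime {M : Type*} [CommMonoid M] {P Q : ℕ}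
    (hPQ : P.Coprime Q) {g : M} (hg : g ^ Q = 1) : ∃ w : M, w ^ Q = 1 ∧ w ^ P = g := by
  obtain ⟨m, hm⟩ :=
    exists_pow_eq_self_of_coprime (hPQ.coprime_dvd_right (orderOf_dvd_of_pow_eq_one hg))
  exact ⟨g ^ m, by rw [← pow_mul, mul_comm, pow_mul, hg, one_pow],
    by rw [← pow_mul, mul_comm, pow_mul, hm]⟩

theorem IsPrimitiveRoot.pow_injOn_Icc {M : Type*} [CommMonoid M] {ζ : M} {k : ℕ}
    (hζ : IsPrimitiveRoot ζ k) : Set.InjOn (ζ ^ ·) (Icc 1 k : Set ℕ) := by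
  intro i hi j hj hij
  simp only [coe_Icc, Set.mem_Icc] at hi hj
  have hfin : IsOfFinOrder ζ := isOfFinOrder_iff_pow_eq_one.mpr ⟨k, by omega, hζ.pow_eq_one⟩
  have hmod : i ≡ j [MOD orderOf ζ] := hfin.pow_eq_pow_iff_modEq.mp hij
  rw [← hζ.eq_orderOf] at hmod
  exact hmod.eq_of_abs_lt (by rw [abs_sub_lt_iff]; omega)

theorem isUnit_or_isUnit_of_squarefree_of_transitive {M ι : Type*} [CommMonoidWithZero M]
    [WfDvdMonoid M] [Nontrivial M] {a b : M} (hab : Squarefree (a * b)) (φ : ι → M →* M)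
    (hfix : ∀ i, φ i a = a)
    (htrans : ∀ π π', Irreducible π → Irreducible π' → π ∣ a * b → π' ∣ a * b → ∃ i, π' ∣ φ i π) :
    IsUnit a ∨ IsUnit b := by
  by_contra! h
  obtain ⟨π, hπ, hπa⟩ :=
    WfDvdMonoid.exists_irreducible_factor h.1 (left_ne_zero_of_mul hab.ne_zero)
  obtain ⟨π', hπ', hπ'b⟩ :=
    WfDvdMonoid.exists_irreducible_factor h.2 (right_ne_zero_of_mul hab.ne_zero)
  obtain ⟨i, hi⟩ := htrans π π' hπ hπ' (dvd_mul_of_dvd_left hπa b) (dvd_mul_of_dvd_right hπ'b a)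
  have hπ'a : π' ∣ a := hi.trans (hfix i ▸ map_dvd (φ i) hπa)
  exact hπ'.not_isUnit (hab π' (mul_dvd_mul hπ'a hπ'b))

namespace Polynomial

variable {R : Type*} [CommRing R]

section Binomial

variable {A B : R} {n : ℕ}

theorem coeff_C_mul_X_pow_add_C_self (hn : 0 < n) : (C A * X ^ n + C B).coeff n = A := by
  simp [coeff_C, hn.ne']

theorem coeff_C_mul_X_pow_add_C_zero (hn : 0 < n) : (C A * X ^ n + C B).coeff 0 = B := by
  simp [coeff_C, hn.ne]

theorem natDegree_C_mul_X_pow_add_C [Nontrivial R] (hn : 0 < n) (hA : A ≠ 0) :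
    (C A * X ^ n + C B).natDegree = n := by
  compute_degree!
  simpa [hn.ne'] using hA

end Binomial

variable [IsDomain R] {A B : R} {n : ℕ}

noncomputable def mirrorMulEquiv : R[X] ≃* R[X] where
  toFun := mirror
  invFun := mirror
  left_inv := mirror_mirror
  right_inv := mirror_mirror
  map_mul' p q := mirror_mul_of_domain p q

theorem irreducible_mirror_iff {f : R[X]} : Irreducible f.mirror ↔ Irreducible f :=
  MulEquiv.irreducible_iff (f := mirrorMulEquiv)

theorem mirror_C_mul_X_pow_add_C (hn : 0 < n) (hA : A ≠ 0) (hB : B ≠ 0) :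
    (C A * X ^ n + C B).mirror = C B * X ^ n + C A := by
  have htrail : (C A * X ^ n + C B).natTrailingDegree = 0 :=
    natTrailingDegree_eq_zero.mpr (.inr (by rwa [coeff_C_mul_X_pow_add_C_zero hn]))
  rw [mirror, htrail, pow_zero, mul_one, reverse, natDegree_C_mul_X_pow_add_C hn hA,
    reflect_add, reflect_C_mul_X_pow, reflect_C, revAt_le le_rfl, Nat.sub_self, pow_zero,
    mul_one, add_comm]

theorem irreducible_C_mul_X_pow_add_C_of_prime_dvd_coeff_zero {π : R} (hn : 0 < n)
    (hπ : Prime π) (hA : ¬π ∣ A) (hB : π ∣ B) (hB2 : ¬π ^ 2 ∣ B) (hAB : IsRelPrime A B) :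
    Irreducible (C A * X ^ n + C B) := by
  have hA0 : A ≠ 0 := by rintro rfl; exact hA (dvd_zero π)
  have hdeg : (C A * X ^ n + C B).degree = (n : WithBot ℕ) := by
    rw [degree_eq_iff_natDegree_eq_of_pos hn, natDegree_C_mul_X_pow_add_C hn hA0]
  refine irreducible_of_eisenstein_criterion ((Ideal.span_singleton_prime hπ.ne_zero).mpr hπ)
    ?_ (fun m hm => ?_) (by rw [hdeg]; exact_mod_cast hn) ?_ (fun r hr => ?_)
  · rwa [leadingCoeff, natDegree_C_mul_X_pow_add_C hn hA0, coeff_C_mul_X_pow_add_C_self hn,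
      Ideal.mem_span_singleton]
  · rw [hdeg, Nat.cast_lt] at hm
    rcases Nat.eq_zero_or_pos m with rfl | hm0
    · rwa [coeff_C_mul_X_pow_add_C_zero hn, Ideal.mem_span_singleton]
    · simp [coeff_C, coeff_X_pow, hm.ne, hm0.ne']
  · rwa [coeff_C_mul_X_pow_add_C_zero hn, Ideal.span_singleton_pow, Ideal.mem_span_singleton]
  · have hcoeff := (C_dvd_iff_dvd_coeff r _).mp hr
    exact hAB (by simpa [coeff_C_mul_X_pow_add_C_self hn] using hcoeff n)
      (by simpa [coeff_C_mul_X_pow_add_C_zero hn] using hcoeff 0)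

theorem irreducible_C_mul_X_pow_add_C_of_prime_dvd_leadingCoeff {π : R} (hn : 0 < n)
    (hπ : Prime π) (hA : π ∣ A) (hA2 : ¬π ^ 2 ∣ A) (hB : ¬π ∣ B) (hAB : IsRelPrime A B) :
    Irreducible (C A * X ^ n + C B) := by
  have hA0 : A ≠ 0 := by rintro rfl; exact hA2 (dvd_zero _)
  have hB0 : B ≠ 0 := by rintro rfl; exact hB (dvd_zero π)
  rw [← irreducible_mirror_iff, mirror_C_mul_X_pow_add_C hn hA0 hB0]
  exact irreducible_C_mul_X_pow_add_C_of_prime_dvd_coeff_zero hn hπ hB hA hA2 hAB.symm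

end Polynomial

namespace MvPolynomial

theorem finSuccEquiv_C {R : Type*} [CommSemiring R] {n : ℕ} (c : R) :
    finSuccEquiv R n (C c) = Polynomial.C (C c) := by
  simpa [algebraMap_eq, Polynomial.algebraMap_apply] using (finSuccEquiv R n).commutes c

section Scale

variable {σ R : Type*}

noncomputable def scale [CommSemiring R] (w : σ → R) : MvPolynomial σ R →ₐ[R] MvPolynomial σ R :=
  aeval fun i => C (w i) * X i

theorem scale_expand [CommSemiring R] {Q : ℕ} {w : σ → R} (hw : ∀ i, w i ^ Q = 1)
    (f : MvPolynomial σ R) : scale w (expand Q f) = expand Q f := by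
  suffices (scale w).comp (expand Q) = expand Q from DFunLike.congr_fun this f
  refine algHom_ext fun i => ?_
  simp [scale, mul_pow, ← C_pow, hw i]

theorem isUnit_expand_iff [CommRing R] [IsReduced R] {Q : ℕ} (hQ : 0 < Q)
    {f : MvPolynomial σ R} : IsUnit (expand Q f) ↔ IsUnit f := by
  simp only [isUnit_iff_eq_C_of_isReduced, expand_eq_C hQ]

end Scale

variable {K : Type*} [Field K]

section Factorization

variable {σ ι : Type*}

theorem irreducible_of_expand_eq_prod {Q : ℕ} (hQ : 0 < Q) {T : Finset ι} (hT : T.Nonempty)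
    {H : ι → MvPolynomial σ K} (hirr : ∀ x ∈ T, Irreducible (H x))
    (hne : ∀ x ∈ T, ∀ y ∈ T, Associated (H x) (H y) → x = y)
    (htrans : ∀ x ∈ T, ∀ y ∈ T,
      ∃ w : σ → K, (∀ i, w i ^ Q = 1) ∧ Associated (scale w (H x)) (H y))
    {F : MvPolynomial σ K} (hF : expand Q F = ∏ x ∈ T, H x) : Irreducible F := by
  have hsq : Squarefree (∏ x ∈ T, H x) :=
    Finset.squarefree_prod_of_pairwise_isCoprime
      (fun x hx y hy hxy => (hirr x hx).isRelPrime_iff_not_dvd.mpr fun hd =>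
        hxy (hne x hx y hy ((hirr x hx).associated_of_dvd (hirr y hy) hd)))
      (fun x hx => (hirr x hx).squarefree)
  have hfactor : ∀ π, Irreducible π → π ∣ ∏ x ∈ T, H x → ∃ x ∈ T, Associated (H x) π := by
    intro π hπ hdvd
    obtain ⟨x, hx, hπx⟩ := hπ.prime.exists_mem_finset_dvd hdvd
    exact ⟨x, hx, (hπ.associated_of_dvd (hirr x hx) hπx).symm⟩
  obtain ⟨x₀, hx₀⟩ := hT
  refine ⟨fun hu => (hirr x₀ hx₀).not_isUnit (isUnit_of_dvd_unit (dvd_prod_of_mem H hx₀)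
    (hF ▸ (isUnit_expand_iff hQ).mpr hu)), fun u v huv => ?_⟩
  rw [← isUnit_expand_iff hQ, ← isUnit_expand_iff hQ (f := v)]
  refine isUnit_or_isUnit_of_squarefree_of_transitive (by rwa [← map_mul, ← huv, hF])
    (fun w : {w : σ → K // ∀ i, w i ^ Q = 1} => (scale w.1 : MvPolynomial σ K →* _))
    (fun w => scale_expand w.2 _) fun π π' hπ hπ' hdvd hdvd' => ?_
  rw [← map_mul, ← huv, hF] at hdvd hdvd'
  obtain ⟨x, hx, hxπ⟩ := hfactor π hπ hdvd
  obtain ⟨y, hy, hyπ'⟩ := hfactor π' hπ' hdvd'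
  obtain ⟨w, hw, hwxy⟩ := htrans x hx y hy
  exact ⟨⟨w, hw⟩, (hyπ'.symm.trans (hwxy.symm.trans (hxπ.map (scale w)))).dvd⟩

theorem irreducible_of_expand_eq_prod_pow {P Q : ℕ} (hQ : 0 < Q) (hPQ : P.Coprime Q) {ζ : K}
    (hζ : IsPrimitiveRoot ζ Q) {D : K → K → MvPolynomial σ K}
    (hirr : ∀ a b, a ≠ 0 → b ≠ 0 → Irreducible (D a b))
    (hinj : ∀ a b a' b', Associated (D a b) (D a' b') → a = a' ∧ b = b')
    (hscale : ∀ a b w₁ w₂ : K, w₁ ^ Q = 1 → w₂ ^ Q = 1 → ∃ w : σ → K,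
      (∀ i, w i ^ Q = 1) ∧ Associated (scale w (D a b)) (D (a * w₁ ^ P) (b * w₂ ^ P)))
    {F : MvPolynomial σ K} (hF : expand Q F = ∏ x ∈ Icc 1 Q ×ˢ Icc 1 Q, D (ζ ^ x.1) (ζ ^ x.2)) :
    Irreducible F := by
  have hζ0 : ζ ≠ 0 := hζ.ne_zero hQ.ne'
  have hratio : ∀ m n : ℕ, ∃ w : K, w ^ Q = 1 ∧ ζ ^ m * w ^ P = ζ ^ n := by
    intro m n
    obtain ⟨w, hwQ, hwP⟩ := exists_pow_eq_of_pow_eq_one_of_coprime hPQ (g := ζ ^ n / ζ ^ m)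
      (by rw [div_pow, pow_right_comm ζ n, pow_right_comm ζ m, hζ.pow_eq_one, one_pow, one_pow,
        div_one])
    exact ⟨w, hwQ, by rw [hwP, mul_div_cancel₀ _ (pow_ne_zero _ hζ0)]⟩
  refine irreducible_of_expand_eq_prod hQ ⟨(1, 1), by simp [Nat.one_le_iff_ne_zero, hQ.ne']⟩
    (fun x _ => hirr _ _ (pow_ne_zero _ hζ0) (pow_ne_zero _ hζ0)) (fun x hx y hy hxy => ?_)
    (fun x _ y _ => ?_) hF
  · obtain ⟨h₁, h₂⟩ := hinj _ _ _ _ hxy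
    rw [mem_product] at hx hy
    exact Prod.ext (hζ.pow_injOn_Icc hx.1 hy.1 h₁) (hζ.pow_injOn_Icc hx.2 hy.2 h₂)
  · obtain ⟨w₁, hw₁, h₁⟩ := hratio x.1 y.1
    obtain ⟨w₂, hw₂, h₂⟩ := hratio x.2 y.2
    rw [← h₁, ← h₂]
    exact hscale _ _ _ _ hw₁ hw₂

end Factorization

theorem prime_X_sub_C_mul_X (c : K) : Prime (X 0 - C c * X 1 : MvPolynomial (Fin 2) K) := by
  refine UniqueFactorizationMonoid.irreducible_iff_prime.mp
    ((MulEquiv.irreducible_iff (finSuccEquiv K 1)).mp ?_)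
  rw [map_sub, map_mul, finSuccEquiv_X_zero, show (1 : Fin 2) = Fin.succ 0 from rfl,
    finSuccEquiv_X_succ, finSuccEquiv_C, ← Polynomial.C_mul]
  exact Polynomial.irreducible_X_sub_C _

theorem exists_prime_dvd_C_mul_X_pow_add_C_mul_X_pow [IsAlgClosed K] {P : ℕ} (hP : (P : K) ≠ 0)
    {a b : K} (ha : a ≠ 0) (hb : b ≠ 0) :
    ∃ π : MvPolynomial (Fin 2) K, Prime π ∧ ¬π ∣ X 0 * X 1 ∧
      π ∣ C a * X 0 ^ P + C b * X 1 ^ P ∧ ¬π ^ 2 ∣ C a * X 0 ^ P + C b * X 1 ^ P := by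
  have hP0 : P ≠ 0 := by rintro rfl; exact hP Nat.cast_zero
  obtain ⟨c, hc⟩ := IsAlgClosed.exists_pow_nat_eq (-b / a) (Nat.pos_of_ne_zero hP0)
  have hcP : c ^ P ≠ 0 := by rw [hc]; exact div_ne_zero (neg_ne_zero.mpr hb) ha
  have hfactor : (C a * X 0 ^ P + C b * X 1 ^ P : MvPolynomial (Fin 2) K)
      = C a * (X 0 ^ P - (C c * X 1) ^ P) := by
    have hac : -(a * c ^ P) = b := by rw [hc]; field_simp
    rw [← hac, C_neg, C_mul, C_pow]
    ring
  refine ⟨X 0 - C c * X 1, prime_X_sub_C_mul_X c, fun h => ?_,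
    hfactor ▸ dvd_mul_of_dvd_right (sub_dvd_pow_sub_pow _ _ P) _, fun h => ?_⟩
  · have hc0 : c = 0 := by simpa using map_dvd (eval ![c, 1]) h
    exact hcP (by simp [hc0, hP0])
  · -- at `X 1 = 1` the binary form becomes `a X^P + b`, which is separable
    let φ : MvPolynomial (Fin 2) K →ₐ[K] Polynomial K := aeval ![Polynomial.X, 1]
    have hφ := map_dvd φ h
    simp only [φ, hfactor, map_pow, map_sub, map_mul, aeval_X, aeval_C] at hφ
    simp only [Matrix.cons_val_zero, Matrix.cons_val_one, Polynomial.algebraMap_eq, mul_one,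
      ← Polynomial.C_pow] at hφ
    rw [(Polynomial.isUnit_C.mpr ha.isUnit).dvd_mul_left, sq] at hφ
    exact Polynomial.not_isUnit_X_sub_C c
      ((Polynomial.separable_X_pow_sub_C _ hP hcP).squarefree _ hφ)

noncomputable def diagonalTrinomial (P : ℕ) (a b : K) : MvPolynomial (Fin 3) K :=
  X 0 ^ P + C a * X 1 ^ P + C b * X 2 ^ P

noncomputable def reciprocalTrinomial (P : ℕ) (a b : K) : MvPolynomial (Fin 3) K :=
  (X 1 * X 2) ^ P + C a * (X 0 * X 2) ^ P + C b * (X 0 * X 1) ^ P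

section Trinomial

variable {P : ℕ} {a b a' b' : K}

theorem finSuccEquiv_diagonalTrinomial :
    finSuccEquiv K 2 (diagonalTrinomial P a b)
      = Polynomial.C 1 * Polynomial.X ^ P + Polynomial.C (C a * X 0 ^ P + C b * X 1 ^ P) := by
  simp only [diagonalTrinomial, map_add, map_mul, map_pow, finSuccEquiv_X_zero, finSuccEquiv_C,
    show (1 : Fin 3) = Fin.succ 0 from rfl, show (2 : Fin 3) = Fin.succ 1 from rfl,
    finSuccEquiv_X_succ, map_one]
  ring

theorem finSuccEquiv_reciprocalTrinomial :
    finSuccEquiv K 2 (reciprocalTrinomial P a b)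
      = Polynomial.C (C b * X 0 ^ P + C a * X 1 ^ P) * Polynomial.X ^ P
        + Polynomial.C ((X 0 * X 1) ^ P) := by
  simp only [reciprocalTrinomial, map_add, map_mul, map_pow, finSuccEquiv_X_zero,
    finSuccEquiv_C, show (1 : Fin 3) = Fin.succ 0 from rfl,
    show (2 : Fin 3) = Fin.succ 1 from rfl, finSuccEquiv_X_succ]
  ring

theorem irreducible_diagonalTrinomial [IsAlgClosed K] (hP : (P : K) ≠ 0) (ha : a ≠ 0)
    (hb : b ≠ 0) : Irreducible (diagonalTrinomial P a b) := by
  have hP0 : 0 < P := Nat.pos_of_ne_zero (by rintro rfl; exact hP Nat.cast_zero)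
  obtain ⟨π, hπ, -, hdvd, hdvd2⟩ := exists_prime_dvd_C_mul_X_pow_add_C_mul_X_pow hP ha hb
  rw [← MulEquiv.irreducible_iff (finSuccEquiv K 2), finSuccEquiv_diagonalTrinomial]
  exact Polynomial.irreducible_C_mul_X_pow_add_C_of_prime_dvd_coeff_zero hP0 hπ hπ.not_dvd_one
    hdvd hdvd2 isRelPrime_one_left

theorem irreducible_reciprocalTrinomial [IsAlgClosed K] (hP : (P : K) ≠ 0) (ha : a ≠ 0)
    (hb : b ≠ 0) : Irreducible (reciprocalTrinomial P a b) := by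
  have hP0 : 0 < P := Nat.pos_of_ne_zero (by rintro rfl; exact hP Nat.cast_zero)
  obtain ⟨π, hπ, hπX, hdvd, hdvd2⟩ := exists_prime_dvd_C_mul_X_pow_add_C_mul_X_pow hP hb ha
  set A : MvPolynomial (Fin 2) K := C b * X 0 ^ P + C a * X 1 ^ P
  have hX0 : ¬X 0 ∣ A := fun h => by simpa [A, zero_pow hP0.ne', ha] using map_dvd (eval ![0, 1]) h
  have hX1 : ¬X 1 ∣ A := fun h => by simpa [A, zero_pow hP0.ne', hb] using map_dvd (eval ![1, 0]) h
  have hrel : IsRelPrime A ((X 0 * X 1) ^ P) :=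
    .pow_right <| .mul_right (X_prime.irreducible.isRelPrime_iff_not_dvd.mpr hX0).symm
      (X_prime.irreducible.isRelPrime_iff_not_dvd.mpr hX1).symm
  rw [← MulEquiv.irreducible_iff (finSuccEquiv K 2), finSuccEquiv_reciprocalTrinomial]
  exact Polynomial.irreducible_C_mul_X_pow_add_C_of_prime_dvd_leadingCoeff hP0 hπ hdvd hdvd2
    (fun h => hπX (hπ.dvd_of_dvd_pow h)) hrel

theorem eq_of_associated_diagonalTrinomial (hP : P ≠ 0)
    (h : Associated (diagonalTrinomial P a b) (diagonalTrinomial P a' b')) : a = a' ∧ b = b' := by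
  obtain ⟨u, hu⟩ := h
  obtain ⟨k, -, hk⟩ := isUnit_iff_eq_C_of_isReduced.mp u.isUnit
  rw [hk] at hu
  have h0 := congrArg (eval ![1, 0, 0]) hu
  have h1 := congrArg (eval ![0, 1, 0]) hu
  have h2 := congrArg (eval ![0, 0, 1]) hu
  simp only [diagonalTrinomial, map_mul, map_add, map_pow, eval_X, eval_C, Matrix.cons_val_zero,
    Matrix.cons_val_one, Matrix.cons_val, one_pow, zero_pow hP, mul_zero, add_zero, zero_add,
    one_mul, mul_one] at h0 h1 h2
  rw [h0, mul_one] at h1 h2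
  exact ⟨h1, h2⟩

theorem eq_of_associated_reciprocalTrinomial (hP : P ≠ 0)
    (h : Associated (reciprocalTrinomial P a b) (reciprocalTrinomial P a' b')) :
    a = a' ∧ b = b' := by
  obtain ⟨u, hu⟩ := h
  obtain ⟨k, -, hk⟩ := isUnit_iff_eq_C_of_isReduced.mp u.isUnit
  rw [hk] at hu
  have h0 := congrArg (eval ![0, 1, 1]) hu
  have h1 := congrArg (eval ![1, 0, 1]) hu
  have h2 := congrArg (eval ![1, 1, 0]) hu
  simp only [reciprocalTrinomial, map_mul, map_add, map_pow, eval_X, eval_C, Matrix.cons_val_zero,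
    Matrix.cons_val_one, Matrix.cons_val, one_pow, zero_pow hP, mul_zero, add_zero, zero_add,
    one_mul, mul_one] at h0 h1 h2
  rw [h0, mul_one] at h1 h2
  exact ⟨h1, h2⟩

theorem scale_diagonalTrinomial (P : ℕ) (a b w₁ w₂ : K) :
    scale ![1, w₁, w₂] (diagonalTrinomial P a b)
      = diagonalTrinomial P (a * w₁ ^ P) (b * w₂ ^ P) := by
  simp only [scale, diagonalTrinomial, aeval_eq_bind₁, map_add, map_mul, map_pow, bind₁_X_right,
    algHom_C, algebraMap_eq, Matrix.cons_val_zero, Matrix.cons_val_one, Matrix.cons_val, C_1,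
    one_mul, mul_pow]
  ring

theorem scale_reciprocalTrinomial (P : ℕ) (a b w₁ w₂ : K) :
    scale ![w₁ * w₂, w₂, w₁] (reciprocalTrinomial P a b)
      = C ((w₁ * w₂) ^ P) * reciprocalTrinomial P (a * w₁ ^ P) (b * w₂ ^ P) := by
  simp only [scale, reciprocalTrinomial, aeval_eq_bind₁, map_add, map_mul, map_pow, bind₁_X_right,
    algHom_C, algebraMap_eq, Matrix.cons_val_zero, Matrix.cons_val_one, Matrix.cons_val, mul_pow]
  ring

end Trinomial

end MvPolynomial

open MvPolynomial

/-- The factor `x^p + a y^p + b z^p` of `𝔽_{p/q}` multiplied by `(xyz)^{max(-p, 0)}`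
(see `map_curveFactor`). -/
noncomputable def curveFactor (p : ℤ) (a b : ℂ) : MvPolynomial (Fin 3) ℂ :=
  if 0 < p then diagonalTrinomial p.natAbs a b else reciprocalTrinomial p.natAbs a b

section CurveFactor

variable {p : ℤ}

theorem irreducible_curveFactor (hp : p ≠ 0) {a b : ℂ} (ha : a ≠ 0) (hb : b ≠ 0) :
    Irreducible (curveFactor p a b) := by
  have hP : (p.natAbs : ℂ) ≠ 0 := Nat.cast_ne_zero.mpr (Int.natAbs_ne_zero.mpr hp)
  unfold curveFactor
  split_ifs
  exacts [irreducible_diagonalTrinomial hP ha hb, irreducible_reciprocalTrinomial hP ha hb]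

theorem eq_of_associated_curveFactor (hp : p ≠ 0) {a b a' b' : ℂ}
    (h : Associated (curveFactor p a b) (curveFactor p a' b')) : a = a' ∧ b = b' := by
  unfold curveFactor at h
  split_ifs at h
  exacts [eq_of_associated_diagonalTrinomial (Int.natAbs_ne_zero.mpr hp) h,
    eq_of_associated_reciprocalTrinomial (Int.natAbs_ne_zero.mpr hp) h]

theorem exists_scale_curveFactor_associated {Q : ℕ} (hQ : Q ≠ 0) (a b w₁ w₂ : ℂ)
    (hw₁ : w₁ ^ Q = 1) (hw₂ : w₂ ^ Q = 1) : ∃ w : Fin 3 → ℂ, (∀ i, w i ^ Q = 1) ∧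
      Associated (scale w (curveFactor p a b))
        (curveFactor p (a * w₁ ^ p.natAbs) (b * w₂ ^ p.natAbs)) := by
  unfold curveFactor
  split_ifs
  · refine ⟨![1, w₁, w₂], fun i => ?_, by rw [scale_diagonalTrinomial]⟩
    fin_cases i <;> simp [hw₁, hw₂]
  · refine ⟨![w₁ * w₂, w₂, w₁], fun i => ?_, ?_⟩
    · fin_cases i <;> simp [mul_pow, hw₁, hw₂]
    · rw [scale_reciprocalTrinomial]
      exact associated_unit_mul_left _ _ ((((IsUnit.of_pow_eq_one hw₁ hQ).mul
        (IsUnit.of_pow_eq_one hw₂ hQ)).pow _).map C)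

theorem map_curveFactor {L : Type*} [Field L] (f : MvPolynomial (Fin 3) ℂ →+* L)
    (hf : ∀ i, f (X i) ≠ 0) (a b : ℂ) :
    f (curveFactor p a b) = f (X 0 * X 1 * X 2) ^ max (-p) 0
      * (f (X 0) ^ p + f (C a) * f (X 1) ^ p + f (C b) * f (X 2) ^ p) := by
  unfold curveFactor
  split_ifs with hp
  · lift p to ℕ using hp.le
    simp [diagonalTrinomial, hp.le]
  · obtain ⟨P, rfl⟩ := Int.exists_eq_neg_ofNat (not_lt.mp hp)
    have hx := hf 0
    have hy := hf 1
    have hz := hf 2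
    simp only [reciprocalTrinomial, Int.natAbs_neg, Int.natAbs_natCast, map_add, map_pow,
      map_mul, neg_neg, Nat.cast_nonneg, sup_of_le_left, zpow_natCast, zpow_neg]
    field_simp
    ring

end CurveFactor

theorem Complex.exp_two_pi_mul_I_mul_div (m n : ℕ) :
    exp (2 * Real.pi * I * m / n) = exp (2 * Real.pi * I / n) ^ m := by
  rw [← exp_nat_mul]
  ring_nf

theorem stmt_12_general (p q : ℤ) (hq : 0 < q) (hcop : IsCoprime p q) (hp0 : p ≠ 0)
    (F : MvPolynomial (Fin 3) ℂ)
    (hF : algebraMap (MvPolynomial (Fin 3) ℂ) (FractionRing (MvPolynomial (Fin 3) ℂ))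
        (MvPolynomial.aeval (fun i => MvPolynomial.X i ^ q.toNat) F)
      = (algebraMap (MvPolynomial (Fin 3) ℂ) (FractionRing (MvPolynomial (Fin 3) ℂ))
            (MvPolynomial.X 0 * MvPolynomial.X 1 * MvPolynomial.X 2)) ^ (q ^ 2 * max (-p) 0)
        * ∏ m ∈ Icc 1 q.toNat, ∏ n ∈ Icc 1 q.toNat,
          ((algebraMap (MvPolynomial (Fin 3) ℂ) (FractionRing (MvPolynomial (Fin 3) ℂ))
              (MvPolynomial.X 0)) ^ p
            + algebraMap (MvPolynomial (Fin 3) ℂ) (FractionRing (MvPolynomial (Fin 3) ℂ))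
                (MvPolynomial.C (Complex.exp (2 * Real.pi * Complex.I * m / q)))
              * (algebraMap (MvPolynomial (Fin 3) ℂ) (FractionRing (MvPolynomial (Fin 3) ℂ))
                  (MvPolynomial.X 1)) ^ p
            + algebraMap (MvPolynomial (Fin 3) ℂ) (FractionRing (MvPolynomial (Fin 3) ℂ))
                (MvPolynomial.C (Complex.exp (2 * Real.pi * Complex.I * n / q)))
              * (algebraMap (MvPolynomial (Fin 3) ℂ) (FractionRing (MvPolynomial (Fin 3) ℂ))
                  (MvPolynomial.X 2)) ^ p)) :
    Irreducible F := by
  lift q to ℕ using hq.le with Q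
  have hQ : 0 < Q := by exact_mod_cast hq
  have hPQ : p.natAbs.Coprime Q := Int.isCoprime_iff_gcd_eq_one.mp hcop
  refine irreducible_of_expand_eq_prod_pow hQ hPQ (Complex.isPrimitiveRoot_exp Q hQ.ne')
    (fun _ _ => irreducible_curveFactor hp0) (fun _ _ _ _ => eq_of_associated_curveFactor hp0)
    (exists_scale_curveFactor_associated hQ.ne') ?_
  apply IsFractionRing.injective (MvPolynomial (Fin 3) ℂ) (FractionRing (MvPolynomial (Fin 3) ℂ))
  set j := algebraMap (MvPolynomial (Fin 3) ℂ) (FractionRing (MvPolynomial (Fin 3) ℂ))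
  have hX : ∀ i, j (X i) ≠ 0 := fun i =>
    (map_ne_zero_iff j (IsFractionRing.injective _ _)).mpr (X_ne_zero i)
  simp only [Int.toNat_natCast, Int.cast_natCast, Complex.exp_two_pi_mul_I_mul_div] at hF
  rw [map_prod, prod_product]
  simp only [map_curveFactor j hX, prod_mul_distrib, prod_const, Nat.card_Icc]
  rw [Nat.add_sub_cancel, ← zpow_natCast, ← zpow_natCast, ← zpow_mul, ← zpow_mul]
  convert hF using 3
  · rfl
  · ring

/-- Irreducibility of the triangular-symmetric curve `𝔽_{p/q}` of type `(p,q)` with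
`gcd(p,q) = 1`, `q > 0`, `p ∉ {0, q}`: the polynomial `F` obtained by expanding
`∏_{m,n=1}^{q} (x^{p/q} + e^{2πim/q} y^{p/q} + e^{2πin/q} z^{p/q})` (and clearing
denominators when `p < 0`) is irreducible.  The fractional powers are made honest by
substituting `x = s^q`, `y = t^q`, `z = u^q` and working in the fraction field `K` of
`ℂ[s,t,u]`, where `p`-th powers are `zpow`s; the monomial factor `(stu)^{q² max(-p,0)}`
accounts for the denominators when `p < 0`. -/
theorem stmt_12 (p q : ℤ) (hq : 0 < q) (hcop : IsCoprime p q) (hp0 : p ≠ 0)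
    (hpq : p ≠ q) (F : MvPolynomial (Fin 3) ℂ)
    (hF : algebraMap (MvPolynomial (Fin 3) ℂ) (FractionRing (MvPolynomial (Fin 3) ℂ))
        (MvPolynomial.aeval (fun i => MvPolynomial.X i ^ q.toNat) F)
      = (algebraMap (MvPolynomial (Fin 3) ℂ) (FractionRing (MvPolynomial (Fin 3) ℂ))
            (MvPolynomial.X 0 * MvPolynomial.X 1 * MvPolynomial.X 2)) ^ (q ^ 2 * max (-p) 0)
        * ∏ m ∈ Icc 1 q.toNat, ∏ n ∈ Icc 1 q.toNat,
          ((algebraMap (MvPolynomial (Fin 3) ℂ) (FractionRing (MvPolynomial (Fin 3) ℂ))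
              (MvPolynomial.X 0)) ^ p
            + algebraMap (MvPolynomial (Fin 3) ℂ) (FractionRing (MvPolynomial (Fin 3) ℂ))
                (MvPolynomial.C (Complex.exp (2 * Real.pi * Complex.I * m / q)))
              * (algebraMap (MvPolynomial (Fin 3) ℂ) (FractionRing (MvPolynomial (Fin 3) ℂ))
                  (MvPolynomial.X 1)) ^ p
            + algebraMap (MvPolynomial (Fin 3) ℂ) (FractionRing (MvPolynomial (Fin 3) ℂ))
                (MvPolynomial.C (Complex.exp (2 * Real.pi * Complex.I * n / q)))
              * (algebraMap (MvPolynomial (Fin 3) ℂ) (FractionRing (MvPolynomial (Fin 3) ℂ))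
                  (MvPolynomial.X 2)) ^ p)) :
    Irreducible F :=
  stmt_12_general p q hq hcop hp0 F hF
end

section
/- Let ν ≥ 2 and consider a germ of irreducible ν-web W given by w^m·a_0(z,w) = ∏_{j=1}^{ν}(slope_j) where the Puiseux slopes are ζ^j c_0(z) w^{r/ν} + higher order terms, ζ = e^{2πi/ν}, c_0 ≢ 0. Then w^r c_0(z)^ν = w^m a_0(z,w) up to higher-order terms implies m ≤ r, and the multiplicity of w = 0 in the discriminant ∏_{i≠j}((ζ^i − ζ^j)c_0(z)w^{r/ν} + …) is r(ν−1); hence this multiplicity is at least m(ν−1) ≥ ν−1, with equality ν−1 if and only if m = r = 1 and w ∤ a_0. -/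
open Finset

/-!
If every factor of a product of `n` power series has order at least `r`, the product is
`X^(r n)` times a power series, so it has order at least `r n` and its coefficient of degree
`r n` is the product of the coefficients of degree `r`. For the `ν` slopes this coefficient is
`(∏ ζ^j) c₀^ν ≠ 0`; as the product is `X^(νm) A`, this forces `νm ≤ νr`. For the `ν(ν-1)`
differences `sᵢ - sⱼ` it gives the order and leading coefficient of the discriminant.
If `r(ν-1) = ν-1` then `r = m = 1`, and `A(0)` is the nonzero coefficient `(∏ ζ^j) c₀^ν`.
-/

namespace PowerSeries

open scoped PowerSeries

variable {ι R : Type*} [CommSemiring R] {s : Finset ι} {f : ι → R⟦X⟧} {r : ℕ}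

theorem le_of_coeff_X_pow_mul_ne_zero {k n : ℕ} {φ : R⟦X⟧} (h : coeff n (X ^ k * φ) ≠ 0) :
    k ≤ n := by
  by_contra! hlt
  exact h (X_pow_dvd_iff.mp (dvd_mul_right _ _) n hlt)

theorem exists_prod_eq_X_pow_mul_prod (h : ∀ i ∈ s, ∀ k < r, coeff k (f i) = 0) :
    ∃ g : ι → R⟦X⟧, (∀ i ∈ s, coeff r (f i) = constantCoeff (g i)) ∧
      ∏ i ∈ s, f i = X ^ (r * #s) * ∏ i ∈ s, g i := by
  choose! g hg using fun i hi => X_pow_dvd_iff.mpr (h i hi)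
  refine ⟨g, fun i hi => ?_, ?_⟩
  · simpa [hg i hi] using coeff_X_pow_mul (g i) r 0
  · rw [prod_congr rfl hg, prod_mul_distrib, prod_const, ← pow_mul]

theorem coeff_prod_eq_zero_of_lt (h : ∀ i ∈ s, ∀ k < r, coeff k (f i) = 0) :
    ∀ k < r * #s, coeff k (∏ i ∈ s, f i) = 0 := by
  obtain ⟨g, -, hprod⟩ := exists_prod_eq_X_pow_mul_prod h
  exact X_pow_dvd_iff.mp ⟨_, hprod⟩

theorem coeff_mul_card_prod (h : ∀ i ∈ s, ∀ k < r, coeff k (f i) = 0) :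
    coeff (r * #s) (∏ i ∈ s, f i) = ∏ i ∈ s, coeff r (f i) := by
  obtain ⟨g, hlead, hprod⟩ := exists_prod_eq_X_pow_mul_prod h
  rw [prod_congr rfl hlead, ← map_prod, hprod]
  simpa using coeff_X_pow_mul (∏ i ∈ s, g i) (r * #s) 0

theorem coeff_mul_card_prod_of_coeff_eq_mul (h : ∀ i ∈ s, ∀ k < r, coeff k (f i) = 0)
    {a : ι → R} {c : R} (hlead : ∀ i ∈ s, coeff r (f i) = a i * c) :
    coeff (r * #s) (∏ i ∈ s, f i) = (∏ i ∈ s, a i) * c ^ #s := by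
  rw [coeff_mul_card_prod h, prod_congr rfl hlead, prod_mul_distrib, prod_const]

end PowerSeries

theorem card_filter_fst_ne_snd {α : Type*} [Fintype α] [DecidableEq α] :
    #((univ : Finset (α × α)).filter (fun p => p.1 ≠ p.2)) =
      Fintype.card α * (Fintype.card α - 1) := by
  have : (univ : Finset (α × α)).filter (fun p => p.1 ≠ p.2) = univ.offDiag := by ext; simp
  rw [this, offDiag_card, card_univ, Nat.mul_sub_one]

theorem stmt_17_general (ν m r : ℕ) (hν : 2 ≤ ν) (hm : 1 ≤ m)
    (ζ : ℂ) (hζ : IsPrimitiveRoot ζ ν)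
    (c0 : PowerSeries ℂ) (hc0 : c0 ≠ 0)
    (s : Fin ν → PowerSeries (PowerSeries ℂ))
    (hslow : ∀ j : Fin ν, ∀ k < r, PowerSeries.coeff (R := PowerSeries ℂ) k (s j) = 0)
    (hslead : ∀ j : Fin ν, PowerSeries.coeff (R := PowerSeries ℂ) r (s j)
      = PowerSeries.C (R := ℂ) (ζ ^ ((j : ℕ) + 1)) * c0)
    (A : PowerSeries (PowerSeries ℂ))
    (hprod : ∏ j, s j = PowerSeries.X ^ (ν * m) * A) :
    m ≤ r ∧
    (∀ k < ν * r * (ν - 1),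
      PowerSeries.coeff (R := PowerSeries ℂ) k
        (∏ p ∈ (univ : Finset (Fin ν × Fin ν)).filter (fun p => p.1 ≠ p.2),
          (s p.1 - s p.2)) = 0) ∧
    PowerSeries.coeff (R := PowerSeries ℂ) (ν * r * (ν - 1))
        (∏ p ∈ (univ : Finset (Fin ν × Fin ν)).filter (fun p => p.1 ≠ p.2),
          (s p.1 - s p.2))
      = PowerSeries.C (R := ℂ)
          (∏ p ∈ (univ : Finset (Fin ν × Fin ν)).filter (fun p => p.1 ≠ p.2),
            (ζ ^ ((p.1 : ℕ) + 1) - ζ ^ ((p.2 : ℕ) + 1))) * c0 ^ (ν * (ν - 1)) ∧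
    ν - 1 ≤ m * (ν - 1) ∧ m * (ν - 1) ≤ r * (ν - 1) ∧
    (r * (ν - 1) = ν - 1 ↔
      m = 1 ∧ r = 1 ∧ PowerSeries.coeff (R := PowerSeries ℂ) 0 A ≠ 0) := by
  set F := (univ : Finset (Fin ν × Fin ν)).filter (fun p => p.1 ≠ p.2)
  have hcard : #F = ν * (ν - 1) := by rw [card_filter_fst_ne_snd, Fintype.card_fin]
  have hdiff : ∀ p ∈ F, ∀ k < r, PowerSeries.coeff k (s p.1 - s p.2) = 0 := fun p _ k hk => by
    simp [hslow p.1 k hk, hslow p.2 k hk]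
  have hdeg : r * #F = ν * r * (ν - 1) := by rw [hcard]; ring
  have hlead : PowerSeries.coeff (r * ν) (∏ j, s j) ≠ 0 := by
    have := PowerSeries.coeff_mul_card_prod_of_coeff_eq_mul (s := univ) (fun j _ => hslow j)
      fun j _ => hslead j
    rw [card_univ, Fintype.card_fin, ← map_prod] at this
    rw [this]
    refine mul_ne_zero ((map_ne_zero_iff _ PowerSeries.C_injective).mpr ?_) (pow_ne_zero _ hc0)
    exact prod_ne_zero_iff.mpr fun j _ => pow_ne_zero _ (hζ.ne_zero (by omega))
  have hmr : m ≤ r := by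
    have := PowerSeries.le_of_coeff_X_pow_mul_ne_zero (hprod ▸ hlead)
    nlinarith
  refine ⟨hmr, hdeg ▸ PowerSeries.coeff_prod_eq_zero_of_lt hdiff, ?_,
    Nat.le_mul_of_pos_left _ hm, Nat.mul_le_mul_right _ hmr, ⟨fun hr => ?_, ?_⟩⟩
  · rw [← hdeg, ← hcard, map_prod PowerSeries.C]
    refine PowerSeries.coeff_mul_card_prod_of_coeff_eq_mul hdiff fun p _ => ?_
    rw [map_sub, hslead, hslead, map_sub, sub_mul]
  · have hr1 : r = 1 := by
      have : 1 ≤ ν - 1 := by omega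
      nlinarith
    have hm1 : m = 1 := by omega
    refine ⟨hm1, hr1, ?_⟩
    rwa [hprod, hm1, hr1, Nat.mul_one, Nat.one_mul, PowerSeries.coeff_X_pow_mul',
      if_pos le_rfl, Nat.sub_self] at hlead
  · rintro ⟨-, rfl, -⟩
    rw [Nat.one_mul]

/-- Multiplicity of a totally invariant component in the discriminant of an irreducible
`ν`-web (Lemma `L:irredutivel`).  After the substitution `w = t^ν`, the Puiseux slopes
become power series `s j = ζ^j c₀(z) t^r + h.o.t.` in `t` over `R = ℂ⟦z⟧`, their product
is `t^{νm}·A` where `A = a₀(z, t^ν)` (so only coefficients of `t`-degree divisible by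
`ν` occur in `A`), and `w ∤ a₀` reads `A(z,0) ≠ 0`.  Then `m ≤ r`, the discriminant
`∏_{i≠j}(sᵢ - sⱼ)` has `t`-order `ν·r(ν-1)` (i.e. `w`-multiplicity `r(ν-1)`) with
leading coefficient `∏_{i≠j}(ζⁱ - ζʲ)·c₀^{ν(ν-1)}`, hence the multiplicity is
`r(ν-1) ≥ m(ν-1) ≥ ν-1`, with equality `ν-1` iff `m = r = 1` and `w ∤ a₀`. -/
theorem stmt_17 (ν m r : ℕ) (hν : 2 ≤ ν) (hm : 1 ≤ m)
    (ζ : ℂ) (hζ : IsPrimitiveRoot ζ ν)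
    (c0 : PowerSeries ℂ) (hc0 : c0 ≠ 0)
    (s : Fin ν → PowerSeries (PowerSeries ℂ))
    (hslow : ∀ j : Fin ν, ∀ k < r, PowerSeries.coeff (R := PowerSeries ℂ) k (s j) = 0)
    (hslead : ∀ j : Fin ν, PowerSeries.coeff (R := PowerSeries ℂ) r (s j)
      = PowerSeries.C (R := ℂ) (ζ ^ ((j : ℕ) + 1)) * c0)
    (A : PowerSeries (PowerSeries ℂ))
    (hA : ∀ k, PowerSeries.coeff (R := PowerSeries ℂ) k A ≠ 0 → ν ∣ k)
    (hprod : ∏ j, s j = PowerSeries.X ^ (ν * m) * A) :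
    m ≤ r ∧
    (∀ k < ν * r * (ν - 1),
      PowerSeries.coeff (R := PowerSeries ℂ) k
        (∏ p ∈ (univ : Finset (Fin ν × Fin ν)).filter (fun p => p.1 ≠ p.2),
          (s p.1 - s p.2)) = 0) ∧
    PowerSeries.coeff (R := PowerSeries ℂ) (ν * r * (ν - 1))
        (∏ p ∈ (univ : Finset (Fin ν × Fin ν)).filter (fun p => p.1 ≠ p.2),
          (s p.1 - s p.2))
      = PowerSeries.C (R := ℂ)
          (∏ p ∈ (univ : Finset (Fin ν × Fin ν)).filter (fun p => p.1 ≠ p.2),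
            (ζ ^ ((p.1 : ℕ) + 1) - ζ ^ ((p.2 : ℕ) + 1))) * c0 ^ (ν * (ν - 1)) ∧
    ν - 1 ≤ m * (ν - 1) ∧ m * (ν - 1) ≤ r * (ν - 1) ∧
    (r * (ν - 1) = ν - 1 ↔
      m = 1 ∧ r = 1 ∧ PowerSeries.coeff (R := PowerSeries ℂ) 0 A ≠ 0) :=
  stmt_17_general ν m r hν hm ζ hζ c0 hc0 s hslow hslead A hprod
end

section
/- Let U(p,0;0) ≢ 0 and suppose F̌(p,q;x) = q + a_1(p,q)q x + ⋯ + a_{ν-1}(p,q)q x^{ν-1} + a_ν(p,q)x^ν + ⋯ + a_d(p,q)x^d with a_ν(p,0) ≢ 0 and all higher coefficients holomorphic. Then by the Weierstrass preparation theorem there exist a unit U and holomorphic functions ā_0,…,ā_{ν-1} such that F̌(p,q;x) = U(p,q;x)·(x^ν − q(ā_{ν-1}(p,q)x^{ν-1} + ⋯ + ā_0(p,q))). -/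
/-!
Over `A = ℂ⟦p,q⟧`, which is complete for the ideal `(p, q)`, Weierstrass division by `F̌` is
available because its `ν`-th coefficient is a unit while the lower ones lie in `(q) ⊆ (p, q)`:
`x^ν = F̌·Q + r` with `deg r < ν`. Modulo the smaller ideal `(q)` we have `F̌ ≡ x^ν·u`, so
`x^ν·(1 - u·Q) ≡ r`; a multiple of `x^ν` of degree `< ν` vanishes, hence `r ≡ 0` and `u·Q ≡ 1`.
Thus `Q` is a unit, the coefficients of `r` are divisible by `q`, and `F̌ = Q⁻¹·(x^ν - r)`.
-/

namespace PowerSeries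

variable {A : Type*} [CommRing A]

theorem eq_zero_of_X_pow_mul_eq_coe {n : ℕ} {w : A⟦X⟧} {r : Polynomial A}
    (hr : r.degree < n) (h : X ^ n * w = (r : A⟦X⟧)) : w = 0 := by
  ext j
  have := congr(coeff (j + n) $h)
  rwa [coeff_X_pow_mul, Polynomial.coeff_coe,
    Polynomial.coeff_eq_zero_of_degree_lt (hr.trans_le (by exact_mod_cast n.le_add_left j))] at this

theorem coe_eq_sum_fin_of_degree_lt {n : ℕ} {r : Polynomial A} (hr : r.degree < n) :
    (r : A⟦X⟧) = ∑ i : Fin n, C (r.coeff i) * X ^ (i : ℕ) := by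
  ext j
  simp only [Polynomial.coeff_coe, map_sum, coeff_C_mul_X_pow]
  rcases lt_or_ge j n with hj | hj
  · rw [Fintype.sum_eq_single ⟨j, hj⟩ fun i hi => if_neg fun h => hi (Fin.ext h.symm), if_pos rfl]
  · rw [Polynomial.coeff_eq_zero_of_degree_lt (hr.trans_le (by exact_mod_cast hj))]
    exact (Finset.sum_eq_zero fun i _ => if_neg (i.is_lt.trans_le hj).ne').symm

theorem order_map_mk_eq {I : Ideal A} {g : A⟦X⟧} {n : ℕ} (hlt : ∀ i < n, coeff i g ∈ I)
    (hn : coeff n g ∉ I) : (g.map (Ideal.Quotient.mk I)).order = n := by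
  simpa [order_eq_nat, coeff_map, Ideal.Quotient.eq_zero_iff_mem] using ⟨hn, hlt⟩

theorem isUnit_and_coeff_mem_of_X_pow_eq_mul_add {𝔞 : Ideal A} (h𝔞 : 𝔞 ≤ Ideal.jacobson ⊥)
    {n : ℕ} {g Q : A⟦X⟧} {r : Polynomial A} (hlt : ∀ i < n, coeff i g ∈ 𝔞) (hr : r.degree < n)
    (heq : X ^ n = g * Q + (r : A⟦X⟧)) : IsUnit Q ∧ ∀ i, r.coeff i ∈ 𝔞 := by
  set π := PowerSeries.map (Ideal.Quotient.mk 𝔞)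
  obtain ⟨u, hu⟩ : X ^ n ∣ π g := X_pow_dvd_iff.mpr fun i hi => by
    simpa [π, coeff_map, Ideal.Quotient.eq_zero_iff_mem] using hlt i hi
  have hred : X ^ n * (1 - u * π Q) =
      ((r.map (Ideal.Quotient.mk 𝔞) : Polynomial (A ⧸ 𝔞)) : (A ⧸ 𝔞)⟦X⟧) := by
    have := congr(π $heq)
    rw [map_add, map_mul, hu, map_pow, map_X, ← Polynomial.polynomial_map_coe] at this
    linear_combination this
  have hinv := eq_zero_of_X_pow_mul_eq_coe (Polynomial.degree_map_le.trans_lt hr) hred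
  constructor
  · have hπQ : IsUnit (π Q) := .of_mul_eq_one_right u (sub_eq_zero.mp hinv).symm
    have := isLocalHom_of_le_jacobson_bot 𝔞 h𝔞
    rw [isUnit_iff_constantCoeff] at hπQ ⊢
    rw [← coeff_zero_eq_constantCoeff_apply, coeff_map, coeff_zero_eq_constantCoeff_apply] at hπQ
    exact (isUnit_map_iff _ _).mp hπQ
  · intro i
    rw [hinv, mul_zero, eq_comm, Polynomial.coe_eq_zero_iff] at hred
    simpa [Ideal.Quotient.eq_zero_iff_mem] using congr(Polynomial.coeff $hred i)

theorem exists_eq_isUnit_mul_X_pow_sub_sum (I 𝔞 : Ideal A) [IsAdicComplete I A] [Nontrivial A]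
    (h𝔞 : 𝔞 ≤ I) {g : A⟦X⟧} {n : ℕ} (hlt : ∀ i < n, coeff i g ∈ 𝔞) (hn : IsUnit (coeff n g)) :
    ∃ (h : A⟦X⟧) (b : Fin n → A), IsUnit h ∧ (∀ i, b i ∈ 𝔞) ∧
      g = h * (X ^ n - ∑ i : Fin n, C (b i) * X ^ (i : ℕ)) := by
  have hI := IsAdicComplete.le_jacobson_bot I
  have hItop : I ≠ ⊤ := ne_top_of_le_ne_top (Ideal.jacobson_eq_top_iff.not.mpr bot_ne_top) hI
  have hord := order_map_mk_eq (fun i hi => h𝔞 (hlt i hi))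
    fun hmem => hItop (Ideal.eq_top_of_isUnit_mem _ hmem hn)
  have hdiv : g.IsWeierstrassDivisorAt I := by
    rwa [IsWeierstrassDivisorAt, hord, ENat.toNat_natCast]
  obtain ⟨hdeg, heq⟩ := hdiv.isWeierstrassDivisionAt_div_mod (X ^ n)
  rw [hord, ENat.toNat_natCast] at hdeg
  generalize hdiv.div (X ^ n) = Q, hdiv.mod (X ^ n) = r at hdeg heq
  obtain ⟨hQ, hr⟩ := isUnit_and_coeff_mem_of_X_pow_eq_mul_add (h𝔞.trans hI) hlt hdeg heq
  refine ⟨↑hQ.unit⁻¹, (r.coeff ·), Units.isUnit _, (hr ·), ?_⟩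
  rw [← coe_eq_sum_fin_of_degree_lt hdeg, heq, add_sub_cancel_right, mul_comm g, ← mul_assoc,
    IsUnit.val_inv_mul, one_mul]

end PowerSeries

theorem stmt_18_general (ν : ℕ)
    (F : PowerSeries (MvPowerSeries (Fin 2) ℂ))
    (hdivq : ∀ i < ν, (MvPowerSeries.X 1 : MvPowerSeries (Fin 2) ℂ) ∣
      PowerSeries.coeff (R := MvPowerSeries (Fin 2) ℂ) i F)
    (hunit : MvPowerSeries.constantCoeff (σ := Fin 2) (R := ℂ)
      (PowerSeries.coeff (R := MvPowerSeries (Fin 2) ℂ) ν F) ≠ 0) :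
    ∃ (U : PowerSeries (MvPowerSeries (Fin 2) ℂ)) (b : Fin ν → MvPowerSeries (Fin 2) ℂ),
      IsUnit U ∧
      F = U * (PowerSeries.X ^ ν
        - PowerSeries.C (R := MvPowerSeries (Fin 2) ℂ) (MvPowerSeries.X 1)
          * ∑ i : Fin ν, PowerSeries.C (R := MvPowerSeries (Fin 2) ℂ) (b i)
              * PowerSeries.X ^ (i : ℕ)) := by
  obtain ⟨U, c, hU, hc, hF⟩ := PowerSeries.exists_eq_isUnit_mul_X_pow_sub_sum
    (.span (.range MvPowerSeries.X)) (.span {MvPowerSeries.X 1})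
    (Ideal.span_mono (Set.singleton_subset_iff.mpr (Set.mem_range_self 1)))
    (fun i hi => Ideal.mem_span_singleton.mpr (hdivq i hi))
    (MvPowerSeries.isUnit_iff_constantCoeff.mpr (isUnit_iff_ne_zero.mpr hunit))
  choose b hb using fun i => Ideal.mem_span_singleton.mp (hc i)
  refine ⟨U, b, hU, ?_⟩
  simp_rw [hF, hb, map_mul, Finset.mul_sum, mul_assoc]

/-- Weierstrass preparation for the dual web near the line dual to a radial singularity
(Proposition `rad33`).  The germ `F̌(p,q;x) = q + a₁(p,q)q x + ⋯ + a_{ν-1}(p,q)q x^{ν-1}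
+ a_ν(p,q)x^ν + ⋯ + a_d(p,q)x^d` at a generic point of `{q = 0}` is modelled as a
polynomial of degree `≤ d` in `x` over the ring `R = ℂ⟦p,q⟧` of germs (variable `0` is
`p`, variable `1` is `q`): its coefficients of index `< ν` are divisible by `q`, the
constant one equals `q`, and the `ν`-th one is a unit (that is, `a_ν(p₀,0) ≠ 0` at the
chosen generic point).  Then `F̌ = U·(x^ν - q(ā_{ν-1}x^{ν-1} + ⋯ + ā₀))` with `U` a
unit. -/
theorem stmt_18 (ν d : ℕ) (hν : 1 ≤ ν) (hd : ν ≤ d)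
    (F : PowerSeries (MvPowerSeries (Fin 2) ℂ))
    (h0 : PowerSeries.coeff (R := MvPowerSeries (Fin 2) ℂ) 0 F = MvPowerSeries.X 1)
    (hdivq : ∀ i < ν, (MvPowerSeries.X 1 : MvPowerSeries (Fin 2) ℂ) ∣
      PowerSeries.coeff (R := MvPowerSeries (Fin 2) ℂ) i F)
    (hunit : MvPowerSeries.constantCoeff (σ := Fin 2) (R := ℂ)
      (PowerSeries.coeff (R := MvPowerSeries (Fin 2) ℂ) ν F) ≠ 0)
    (hpoly : ∀ i > d, PowerSeries.coeff (R := MvPowerSeries (Fin 2) ℂ) i F = 0) :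
    ∃ (U : PowerSeries (MvPowerSeries (Fin 2) ℂ)) (b : Fin ν → MvPowerSeries (Fin 2) ℂ),
      IsUnit U ∧
      F = U * (PowerSeries.X ^ ν
        - PowerSeries.C (R := MvPowerSeries (Fin 2) ℂ) (MvPowerSeries.X 1)
          * ∑ i : Fin ν, PowerSeries.C (R := MvPowerSeries (Fin 2) ℂ) (b i)
              * PowerSeries.X ^ (i : ℕ)) :=
  stmt_18_general ν F hdivq hunit
end
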